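/- Let T : E → F be a bijective φ-isometry between normed spaces with φ non-decreasing. Fix a, b ∈ E with midpoint z = (a+b)/2. Let Ψ be the point reflection of E about z (Ψ(x) = 2z − x) and Ψ' the point reflection of F about (Ta+Tb)/2. Then the composition S = Ψ ∘ T⁻¹ ∘ Ψ' ∘ T is a bijective (φ∘φ)-isometry of E onto itself satisfying Sa = a and Sb = b. -/

import Mathlib

/-! Point reflections are isometries, so pre- and post-composing with them keeps a distortion
bound `φ`; the only loss comes from composing `T` with `T⁻¹`, which turns `φ` into `φ ∘ φ`.
Since `Ψ'` swaps `T a` and `T b` while `Ψ` swaps `a` and `b`, the composite fixes `a` and `b`. -/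

open Set

theorem Equiv.invFun_eq_symm {α β : Type*} [Nonempty α] (e : α ≃ β) : Function.invFun e = e.symm :=
  Function.invFun_eq_of_injective_of_rightInverse e.injective e.apply_symm_apply

section

variable {α β γ : Type*} [PseudoMetricSpace α] [PseudoMetricSpace β] [PseudoMetricSpace γ]

def DistortionBound (φ : ℝ → ℝ) (f : α → β) : Prop :=
  ∀ x y, dist (f x) (f y) ≤ φ (dist x y)

namespace DistortionBound

variable {φ ψ : ℝ → ℝ} {f : α → β} {g : β → γ}

theorem comp (hψ : MonotoneOn ψ (Ici 0)) (hg : DistortionBound ψ g) (hf : DistortionBound φ f) :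
    DistortionBound (ψ ∘ φ) (g ∘ f) := fun x y =>
  calc dist (g (f x)) (g (f y)) ≤ ψ (dist (f x) (f y)) := hg _ _
    _ ≤ ψ (φ (dist x y)) := hψ dist_nonneg (dist_nonneg.trans (hf x y)) (hf x y)

theorem isometry_comp (hg : Isometry g) (hf : DistortionBound φ f) :
    DistortionBound φ (g ∘ f) := fun x y => by
  simpa only [Function.comp_apply, hg.dist_eq] using hf x y

theorem comp_isometry (hg : DistortionBound φ g) (hf : Isometry f) :
    DistortionBound φ (g ∘ f) := fun x y => by
  simpa only [Function.comp_apply, hf.dist_eq] using hg (f x) (f y)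

end DistortionBound

def Equiv.IsPhiIsometry (φ : ℝ → ℝ) (e : α ≃ β) : Prop :=
  DistortionBound φ e ∧ DistortionBound φ e.symm

namespace Equiv.IsPhiIsometry

variable {φ : ℝ → ℝ} {e : α ≃ β}

theorem symm (he : e.IsPhiIsometry φ) : e.symm.IsPhiIsometry φ :=
  ⟨he.2, he.1⟩

theorem trans (hφ : MonotoneOn φ (Ici 0)) {e' : β ≃ γ} (he : e.IsPhiIsometry φ)
    (he' : e'.IsPhiIsometry φ) : (e.trans e').IsPhiIsometry (φ ∘ φ) :=
  ⟨(he'.1.comp hφ he.1 : DistortionBound (φ ∘ φ) (e' ∘ e)),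
    (he.2.comp hφ he'.2 : DistortionBound (φ ∘ φ) (e.symm ∘ e'.symm))⟩

theorem trans_isometryEquiv (he : e.IsPhiIsometry φ) (ι : β ≃ᵢ γ) :
    (e.trans ι.toEquiv).IsPhiIsometry φ :=
  ⟨(he.1.isometry_comp ι.isometry : DistortionBound φ (ι ∘ e)),
    (he.2.comp_isometry ι.symm.isometry : DistortionBound φ (e.symm ∘ ι.symm))⟩

end Equiv.IsPhiIsometry

end

theorem reflection_composition_is_phi_phi_isometry_general
    {E F : Type*} [NormedAddCommGroup E] [NormedSpace ℝ E]
    [NormedAddCommGroup F] [NormedSpace ℝ F]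
    (φ : ℝ → ℝ) (hφmono : MonotoneOn φ (Set.Ici 0))
    (T : E → F) (hbij : Function.Bijective T)
    (hT : ∀ x y : E, ‖T x - T y‖ ≤ φ ‖x - y‖)
    (hTinv : ∀ f g : F, ‖Function.invFun T f - Function.invFun T g‖ ≤ φ ‖f - g‖)
    (a b : E) :
    let z : E := (2:ℝ)⁻¹ • (a + b)
    let w : F := (2:ℝ)⁻¹ • (T a + T b)
    let Ψ : E → E := fun x => (2:ℝ) • z - x
    let Ψ' : F → F := fun f => (2:ℝ) • w - f
    let S : E → E := Ψ ∘ Function.invFun T ∘ Ψ' ∘ T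
    Function.Bijective S ∧
    (∀ x y : E, ‖S x - S y‖ ≤ φ (φ ‖x - y‖)) ∧
    (∀ x y : E, ‖Function.invFun S x - Function.invFun S y‖ ≤ φ (φ ‖x - y‖)) ∧
    S a = a ∧ S b = b := by
  intro z w Ψ Ψ' S
  set e := Equiv.ofBijective T hbij
  have hinv : Function.invFun T = e.symm := e.invFun_eq_symm
  have he : e.IsPhiIsometry φ := by
    simp only [Equiv.IsPhiIsometry, DistortionBound, dist_eq_norm, ← hinv]
    exact ⟨hT, hTinv⟩
  set Sₑ : E ≃ E := ((e.trans (IsometryEquiv.subLeft ((2:ℝ) • w)).toEquiv).trans e.symm).trans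
    (IsometryEquiv.subLeft ((2:ℝ) • z)).toEquiv
  have hS : S = Sₑ := by
    simp only [S, hinv]; rfl
  have hSₑ : Sₑ.IsPhiIsometry (φ ∘ φ) :=
    ((he.trans_isometryEquiv _).trans hφmono he.symm).trans_isometryEquiv _
  have hz : (2:ℝ) • z = a + b := smul_inv_smul₀ two_ne_zero _
  have hw : (2:ℝ) • w = T a + T b := smul_inv_smul₀ two_ne_zero _
  refine ⟨hS ▸ Sₑ.bijective, ?_, ?_, ?_, ?_⟩
  · simpa only [hS, DistortionBound, dist_eq_norm, Function.comp_apply] using hSₑ.1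
  · simpa only [hS, Sₑ.invFun_eq_symm, DistortionBound, dist_eq_norm, Function.comp_apply]
      using hSₑ.2
  all_goals simp only [S, Ψ, Ψ', Function.comp_apply, hw, hz, hinv, e,
    Equiv.ofBijective_symm_apply_apply, add_sub_cancel_left, add_sub_cancel_right]

theorem reflection_composition_is_phi_phi_isometry
    {E F : Type*} [NormedAddCommGroup E] [NormedSpace ℝ E]
    [NormedAddCommGroup F] [NormedSpace ℝ F]
    (φ : ℝ → ℝ) (hφmono : MonotoneOn φ (Set.Ici 0))
    (hφnonneg : ∀ t ≥ (0:ℝ), 0 ≤ φ t)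
    (T : E → F) (hbij : Function.Bijective T)
    (hT : ∀ x y : E, ‖T x - T y‖ ≤ φ ‖x - y‖)
    (hTinv : ∀ f g : F, ‖Function.invFun T f - Function.invFun T g‖ ≤ φ ‖f - g‖)
    (a b : E) :
    let z : E := (2:ℝ)⁻¹ • (a + b)
    let w : F := (2:ℝ)⁻¹ • (T a + T b)
    let Ψ : E → E := fun x => (2:ℝ) • z - x
    let Ψ' : F → F := fun f => (2:ℝ) • w - f
    let S : E → E := Ψ ∘ Function.invFun T ∘ Ψ' ∘ T
    Function.Bijective S ∧
    (∀ x y : E, ‖S x - S y‖ ≤ φ (φ ‖x - y‖)) ∧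
    (∀ x y : E, ‖Function.invFun S x - Function.invFun S y‖ ≤ φ (φ ‖x - y‖)) ∧
    S a = a ∧ S b = b :=
  reflection_composition_is_phi_phi_isometry_general φ hφmono T hbij hT hTinv a b
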